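/- arXiv:2111.13077 — 8 statements merged into one kernel-verified Lean document; each statement's English description precedes it below -/
import Mathlib

section
/- For every a ∈ A and every ε ∈ (0,1) one has the inclusion Γ_a(ε) ⊆ ∪_{d ≤ a} X'_d; that is, every x ∈ Γ_a(ε) belongs to X'_d for some index d with d ≤ a. -/
/-!
Each `X_b ∖ {0}` lies inside `X_b(ε)`, so a point of `Γ_a(ε)` lies in no `X_b` with `¬ b ≤ a`.
Hence any minimal `X_d` containing `x` (one exists since `X_{a_min} = X` and subspaces satisfy the
descending chain condition) has `d ≤ a`, and no strictly smaller `X_c` contains `x`.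
-/

open Set

theorem Submodule.mul_norm_lt_norm_orthogonalProjectionOnto_of_mem {𝕜 E : Type*} [RCLike 𝕜]
    [NormedAddCommGroup E] [InnerProductSpace 𝕜 E] (K : Submodule 𝕜 E)
    [K.HasOrthogonalProjection] {x : E} (hxK : x ∈ K) (hx : x ≠ 0) {ε : ℝ} (hε : 0 < ε) :
    (1 - ε) * ‖x‖ < ‖(K.orthogonalProjectionOnto x : E)‖ := by
  rw [show (K.orthogonalProjectionOnto x : E) = x from
    congrArg Subtype.val (K.orthogonalProjectionOnto_mem_subspace_eq_self ⟨x, hxK⟩)]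
  exact mul_lt_of_lt_one_left (norm_pos_iff.mpr hx) (by linarith)

theorem stmt1_general {X : Type*} [NormedAddCommGroup X] [InnerProductSpace ℝ X]
    [FiniteDimensional ℝ X] {A : Type*} (Xa : A → Submodule ℝ X)
    (hmin : ∃ amin : A, Xa amin = ⊤)
    (a : A) (ε : ℝ) (hε : ε ∈ Set.Ioo (0:ℝ) 1) (x : X)
    (hx : x ∈ ({(0:X)}ᶜ : Set X) \
      ⋃ b ∈ {b : A | ¬ Xa a ≤ Xa b},
        {y : X | ‖(Submodule.orthogonalProjectionOnto (Xa b) y : X)‖ > (1 - ε) * ‖y‖}) :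
    ∃ d : A, Xa a ≤ Xa d ∧
      x ∈ (Xa d : Set X) \ ⋃ c ∈ {c : A | Xa c < Xa d}, (Xa c : Set X) := by
  obtain ⟨hx0, hxΓ⟩ := hx
  have le_of_mem : ∀ b, x ∈ Xa b → Xa a ≤ Xa b := fun b hxb ↦ by
    by_contra hab
    exact hxΓ <| mem_biUnion hab <|
      (Xa b).mul_norm_lt_norm_orthogonalProjectionOnto_of_mem hxb hx0 hε.1
  obtain ⟨d, hxd, hd⟩ := exists_minimalFor_of_wellFoundedLT (fun d ↦ x ∈ Xa d) Xa <|
    hmin.imp fun _ (htop : Xa _ = ⊤) ↦ htop ▸ Submodule.mem_top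
  refine ⟨d, le_of_mem d hxd, hxd, ?_⟩
  simp only [mem_iUnion]
  rintro ⟨c, hcd, hxc⟩
  exact hcd.not_ge (hd hxc hcd.le)

/-- Setting: `X` a finite-dimensional real inner product space, `(Xa a)_{a ∈ A}`
a finite family of subspaces closed under intersection and containing `X` itself.  Writing
`b ≤ a` iff `Xa a ⊆ Xa b`, `x_b` for the orthogonal projection of `x` onto `Xa b`,
`X_b(ε) = {x | ‖x_b‖ > (1-ε)‖x‖}`, `Γ_a(ε) = (X \ {0}) \ ⋃_{¬ b ≤ a} X_b(ε)` and
`X'_d = X_d \ ⋃_{c ⪈ d} X_c`, every `x ∈ Γ_a(ε)` belongs to `X'_d` for some `d ≤ a`. -/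
theorem stmt1 {X : Type*} [NormedAddCommGroup X] [InnerProductSpace ℝ X]
    [FiniteDimensional ℝ X] {A : Type*} [Finite A] (Xa : A → Submodule ℝ X)
    (hinter : ∀ a b : A, ∃ c : A, Xa a ⊓ Xa b = Xa c)
    (hmin : ∃ amin : A, Xa amin = ⊤)
    (a : A) (ε : ℝ) (hε : ε ∈ Set.Ioo (0:ℝ) 1) (x : X)
    (hx : x ∈ ({(0:X)}ᶜ : Set X) \
      ⋃ b ∈ {b : A | ¬ Xa a ≤ Xa b},
        {y : X | ‖(Submodule.orthogonalProjectionOnto (Xa b) y : X)‖ > (1 - ε) * ‖y‖}) :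
    ∃ d : A, Xa a ≤ Xa d ∧
      x ∈ (Xa d : Set X) \ ⋃ c ∈ {c : A | Xa c < Xa d}, (Xa c : Set X) :=
  stmt1_general Xa hmin a ε hε x hx
end

section
/- For every a ∈ A, every ε ∈ (0,1) and every δ₀ > 0, every point x ∈ Γ_a(ε) lies in Y_d(δ) for some index d with d ≤ a and some δ ∈ (0,δ₀]; that is, Γ_a(ε) ⊆ ∪_{d ≤ a} ∪_{δ ∈ (0,δ₀]} Y_d(δ). -/
/-!
Let `X_d` be the smallest subspace of the family containing both `X_a` and `x`. Then `x ∈ X_d`,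
so `x ∈ X_d(δ)` for every `δ > 0`. A strictly smaller `X_c` cannot contain `x`: if `X_a ⊆ X_c`
this is the minimality of `X_d`, and otherwise `x ∈ Γ_a(ε)` gives `‖x_c‖ ≤ (1 - ε)‖x‖`. So
`‖x_c‖ < ‖x‖` for the finitely many such `c`, and since the closure of `X_c(η)` lies in
`{y | (1 - η)‖y‖ ≤ ‖y_c‖}` while `3 δ^{1/n} → 0`, the point `x` avoids all these closures once `δ`
is small enough.
-/

open Set Filter Topology

theorem exists_least_ge_of_inf_closed {A α : Type*} [Finite A] [SemilatticeInf α] (f : A → α)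
    (hinf : ∀ a b, ∃ c, f a ⊓ f b = f c) {w : α} (hw : ∃ b, w ≤ f b) :
    ∃ d, w ≤ f d ∧ ∀ c, w ≤ f c → f d ≤ f c := by
  obtain ⟨d, hd, hmin⟩ :=
    Set.Finite.exists_minimalFor f {b | w ≤ f b} (Set.toFinite _) hw
  refine ⟨d, hd, fun c hc => ?_⟩
  obtain ⟨e, he⟩ := hinf d c
  have hwe : w ≤ f e := he ▸ le_inf hd hc
  calc f d ≤ f e := hmin hwe (he ▸ inf_le_left)
    _ = f d ⊓ f c := he.symm
    _ ≤ f c := inf_le_right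

namespace Submodule

variable {𝕜 E : Type*} [RCLike 𝕜] [NormedAddCommGroup E] [InnerProductSpace 𝕜 E]
  (K : Submodule 𝕜 E) [K.HasOrthogonalProjection]

theorem norm_starProjection_lt_norm {x : E} (hx : x ∉ K) : ‖K.starProjection x‖ < ‖x‖ := by
  have hperp : Kᗮ.starProjection x ≠ 0 := fun h => by
    rw [starProjection_apply_eq_zero_iff, orthogonal_orthogonal] at h
    exact hx h
  have hpyth := norm_sq_eq_add_norm_sq_starProjection x K
  have hperp_pos : 0 < ‖Kᗮ.starProjection x‖ := norm_pos_iff.2 hperp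
  nlinarith [norm_nonneg (K.starProjection x), norm_nonneg x]

theorem eventually_notMem_closure_setOf_lt_norm_starProjection {x : E}
    (hx : ‖K.starProjection x‖ < ‖x‖) :
    ∀ᶠ η in 𝓝 (0 : ℝ), x ∉ closure {y : E | (1 - η) * ‖y‖ < ‖K.starProjection y‖} := by
  have hlim : Tendsto (fun η : ℝ => (1 - η) * ‖x‖) (𝓝 0) (𝓝 ‖x‖) :=
    Continuous.tendsto' (by fun_prop) _ _ (by simp)
  filter_upwards [hlim.eventually_const_lt hx] with η hη hmem
  have hle := closure_lt_subset_le (continuous_const.mul continuous_norm)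
    (K.starProjection.continuous.norm) hmem
  exact hle.not_gt hη

end Submodule

theorem tendsto_const_mul_rpow_nhdsGT_zero (C : ℝ) {p : ℝ} (hp : 0 < p) :
    Tendsto (fun δ : ℝ => C * δ ^ p) (𝓝[>] 0) (𝓝 0) := by
  have h := ((Real.continuousAt_rpow_const 0 p (Or.inr hp.le)).tendsto.mono_left
    (nhdsWithin_le_nhds (s := Ioi 0))).const_mul C
  simpa [Real.zero_rpow hp.ne'] using h

/-- With `X_b(ε) = {x | ‖x_b‖ > (1-ε)‖x‖}`,
`Γ_a(ε) = (X \ {0}) \ ⋃_{¬ b ≤ a} X_b(ε)` and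
`Y_d(δ) = X_d(δ) \ ⋃_{c ⪈ d} closure (X_c(3 δ^{1/n}))` (where `n = dim X ≥ 1`),
for every `ε ∈ (0,1)` and `δ₀ > 0` one has
`Γ_a(ε) ⊆ ⋃_{d ≤ a} ⋃_{δ ∈ (0,δ₀]} Y_d(δ)`. -/
theorem stmt2 {X : Type*} [NormedAddCommGroup X] [InnerProductSpace ℝ X]
    [FiniteDimensional ℝ X] (hn : 1 ≤ Module.finrank ℝ X)
    {A : Type*} [Finite A] (Xa : A → Submodule ℝ X)
    (hinter : ∀ a b : A, ∃ c : A, Xa a ⊓ Xa b = Xa c)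
    (hmin : ∃ amin : A, Xa amin = ⊤)
    (Xset : A → ℝ → Set X)
    (hXset : ∀ b η, Xset b η = {y : X | ‖((Xa b).orthogonalProjection y : X)‖ > (1 - η) * ‖y‖})
    (a : A) (ε : ℝ) (hε : ε ∈ Set.Ioo (0:ℝ) 1) (δ₀ : ℝ) (hδ₀ : 0 < δ₀) :
    (({(0:X)}ᶜ : Set X) \ ⋃ b ∈ {b : A | ¬ Xa a ≤ Xa b}, Xset b ε)
      ⊆ ⋃ d ∈ {d : A | Xa a ≤ Xa d}, ⋃ δ ∈ Set.Ioc (0:ℝ) δ₀,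
          (Xset d δ \
            ⋃ c ∈ {c : A | Xa c < Xa d},
              closure (Xset c (3 * δ ^ ((1:ℝ) / (Module.finrank ℝ X : ℝ))))) := by
  intro x ⟨hx0, hxΓ⟩
  have hshrink : ∀ t : ℝ, 0 < t → (1 - t) * ‖x‖ < ‖x‖ := fun t ht => by
    nlinarith [norm_pos_iff.2 (show x ≠ 0 from hx0)]
  obtain ⟨d, had, hleast⟩ := exists_least_ge_of_inf_closed Xa hinter (w := Xa a ⊔ ℝ ∙ x)
    (hmin.imp fun _ h => le_top.trans h.ge)
  have hxd : x ∈ Xa d := had (Submodule.mem_sup_right (Submodule.mem_span_singleton_self x))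
  have hproj_lt : ∀ c, Xa c < Xa d → ‖(Xa c).starProjection x‖ < ‖x‖ := by
    intro c hc
    by_cases hac : Xa a ≤ Xa c
    · refine (Xa c).norm_starProjection_lt_norm fun hxc => hc.not_ge (hleast c ?_)
      exact sup_le hac ((Submodule.span_singleton_le_iff_mem x _).2 hxc)
    · have hxc : x ∉ Xset c ε := fun h => hxΓ (mem_biUnion hac h)
      rw [hXset] at hxc
      exact (not_lt.1 hxc).trans_lt (hshrink ε hε.1)
  have hfar : ∀ᶠ δ in 𝓝[>] 0, ∀ c, Xa c < Xa d →
      x ∉ closure (Xset c (3 * δ ^ ((1:ℝ) / (Module.finrank ℝ X : ℝ)))) := by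
    refine eventually_all.2 fun c => eventually_imp_distrib_left.2 fun hc => ?_
    simp only [hXset]
    exact (tendsto_const_mul_rpow_nhdsGT_zero 3 (one_div_pos.2 (Nat.cast_pos.2 hn))).eventually
      ((Xa c).eventually_notMem_closure_setOf_lt_norm_starProjection (hproj_lt c hc))
  obtain ⟨δ, hδfar, hδ⟩ := (hfar.and (Ioc_mem_nhdsGT hδ₀)).exists
  refine mem_iUnion₂.2 ⟨d, le_sup_left.trans had, mem_iUnion₂.2 ⟨δ, hδ, ?_, ?_⟩⟩
  · rw [hXset]
    show (1 - δ) * ‖x‖ < ‖(Xa d).starProjection x‖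
    rw [Submodule.starProjection_eq_self_iff.2 hxd]
    exact hshrink δ hδ.1
  · rw [mem_iUnion₂]
    rintro ⟨c, hc, hxc⟩
    exact hδfar c hc hxc
end

section
/- For every a ∈ A, every ε ∈ (0,1) and every δ₀ > 0, there exist J ∈ ℕ, indices d_1,…,d_J ∈ A with d_j ≤ a, and numbers δ_1,…,δ_J ∈ (0,δ₀], such that Γ_a(ε) ⊆ ∪_{j≤J} Y_{d_j}(δ_j). -/
/-!
Give every index `d` the threshold `δ_d = u (dim X_d)`, where `u 0 = min δ₀ ε` and
`u (m + 1) = (u m / 4) ^ n`, so that `3 δ_d^{1/n} < min ε δ_c` whenever `X_c ⊊ X_d`.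
For `x ∈ Γ_a(ε)` take, among the `d ≥ a` with `x ∈ X_d(δ_d)` (e.g. `a_min`), one with `X_d`
minimal. If `x ∉ Y_d(δ_d)`, then `x` lies in the closure of `X_c(3 δ_d^{1/n})` for some
`X_c ⊊ X_d`, hence in `X_c(ε)`, forcing `c ≥ a`, and in `X_c(δ_c)`, contradicting minimality.
So one set `Y_d(δ_d)` per `d ≥ a` covers `Γ_a(ε)`.
-/

open Set

namespace Submodule

variable {X : Type*} [NormedAddCommGroup X] [InnerProductSpace ℝ X]

def projCone (K : Submodule ℝ X) [K.HasOrthogonalProjection] (η : ℝ) : Set X :=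
  {y : X | ‖(K.orthogonalProjectionOnto y : X)‖ > (1 - η) * ‖y‖}

variable (K : Submodule ℝ X) [K.HasOrthogonalProjection]

theorem mem_projCone_of_mem {η : ℝ} (hη : 0 < η) {y : X} (hy : y ∈ K) (hy0 : y ≠ 0) :
    y ∈ K.projCone η := by
  have hPy : (K.orthogonalProjectionOnto y : X) = y :=
    congrArg Subtype.val (K.orthogonalProjectionOnto_mem_subspace_eq_self ⟨y, hy⟩)
  have := norm_pos_iff.2 hy0
  show (1 - η) * ‖y‖ < ‖(K.orthogonalProjectionOnto y : X)‖
  rw [hPy]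
  nlinarith

theorem mem_projCone_of_mem_closure {η η' : ℝ} (hη : η < η') {y : X} (hy0 : y ≠ 0)
    (hy : y ∈ closure (K.projCone η)) : y ∈ K.projCone η' := by
  have hle : (1 - η) * ‖y‖ ≤ ‖(K.orthogonalProjectionOnto y : X)‖ :=
    closure_lt_subset_le (by fun_prop) (by fun_prop) hy
  have := norm_pos_iff.2 hy0
  show (1 - η') * ‖y‖ < _
  nlinarith

end Submodule

open Submodule

theorem exists_mem_projCone_diff_closure {X : Type*} [NormedAddCommGroup X]
    [InnerProductSpace ℝ X] [FiniteDimensional ℝ X] {A : Type*} (Xa : A → Submodule ℝ X)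
    (a : A) {ε : ℝ} (δ r : A → ℝ) (hr : ∀ c d, Xa c < Xa d → r d < ε ∧ r d < δ c)
    {x : X} (hx0 : x ≠ 0) (hΓ : ∀ b, x ∈ (Xa b).projCone ε → Xa a ≤ Xa b)
    {d : A} (had : Xa a ≤ Xa d) (hxd : x ∈ (Xa d).projCone (δ d)) :
    ∃ d, Xa a ≤ Xa d ∧ x ∈ (Xa d).projCone (δ d) \
      ⋃ c ∈ {c : A | Xa c < Xa d}, closure ((Xa c).projCone (r d)) := by
  obtain ⟨d', ⟨had', hxd'⟩, hmin⟩ := (InvImage.wf Xa wellFounded_lt).has_min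
    {d | Xa a ≤ Xa d ∧ x ∈ (Xa d).projCone (δ d)} ⟨d, had, hxd⟩
  refine ⟨d', had', hxd', ?_⟩
  simp only [mem_iUnion]
  rintro ⟨c, hcd, hxc⟩
  obtain ⟨hrε, hrδ⟩ := hr c d' hcd
  exact hmin c ⟨hΓ c ((Xa c).mem_projCone_of_mem_closure hrε hx0 hxc),
    (Xa c).mem_projCone_of_mem_closure hrδ hx0 hxc⟩ hcd

noncomputable def shrinkSeq (n : ℕ) (s : ℝ) : ℕ → ℝ
  | 0 => s
  | m + 1 => (shrinkSeq n s m / 4) ^ n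

section shrinkSeq

variable {n : ℕ} {s : ℝ} (hs : 0 < s)
include hs

theorem shrinkSeq_pos (m : ℕ) : 0 < shrinkSeq n s m := by
  induction m with
  | zero => exact hs
  | succ m ih => exact pow_pos (by positivity) n

variable (hn : n ≠ 0)
include hn

theorem shrinkSeq_succ_rpow (m : ℕ) :
    shrinkSeq n s (m + 1) ^ ((1 : ℝ) / n) = shrinkSeq n s m / 4 := by
  have h0 := (shrinkSeq_pos (n := n) hs m).le
  rw [shrinkSeq, one_div, Real.pow_rpow_inv_natCast (by positivity) hn]

theorem shrinkSeq_succ_le_of_le_four {m : ℕ} (hm : shrinkSeq n s m ≤ 4) :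
    shrinkSeq n s (m + 1) ≤ shrinkSeq n s m := by
  have h0 := (shrinkSeq_pos (n := n) hs m).le
  calc shrinkSeq n s (m + 1) = (shrinkSeq n s m / 4) ^ n := rfl
    _ ≤ shrinkSeq n s m / 4 := pow_le_of_le_one (by positivity) (by linarith) hn
    _ ≤ shrinkSeq n s m := by linarith

variable (hs4 : s ≤ 4)
include hs4

theorem shrinkSeq_le (m : ℕ) : shrinkSeq n s m ≤ s := by
  induction m with
  | zero => exact le_rfl
  | succ m ih => exact (shrinkSeq_succ_le_of_le_four hs hn (ih.trans hs4)).trans ih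

theorem shrinkSeq_antitone : Antitone (shrinkSeq n s) :=
  antitone_nat_of_succ_le fun m =>
    shrinkSeq_succ_le_of_le_four hs hn ((shrinkSeq_le hs hn hs4 m).trans hs4)

theorem three_mul_shrinkSeq_rpow_lt {k m : ℕ} (hkm : k < m) :
    3 * shrinkSeq n s m ^ ((1 : ℝ) / n) < shrinkSeq n s k := by
  obtain ⟨m, rfl⟩ := Nat.exists_eq_add_of_lt hkm
  rw [shrinkSeq_succ_rpow hs hn]
  have := shrinkSeq_pos (n := n) hs (k + m)
  have := shrinkSeq_antitone hs hn hs4 (Nat.le_add_right k m)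
  linarith

end shrinkSeq

theorem stmt3_general {X : Type*} [NormedAddCommGroup X] [InnerProductSpace ℝ X]
    [FiniteDimensional ℝ X] (hn : 1 ≤ Module.finrank ℝ X)
    {A : Type*} [Finite A] (Xa : A → Submodule ℝ X)
    (hmin : ∃ amin : A, Xa amin = ⊤)
    (Xset : A → ℝ → Set X)
    (hXset : ∀ b η, Xset b η = {y : X | ‖(Submodule.orthogonalProjectionOnto (Xa b) y : X)‖ > (1 - η) * ‖y‖})
    (Yset : A → ℝ → Set X)
    (hYset : ∀ d δ, Yset d δ = Xset d δ \
      ⋃ c ∈ {c : A | Xa c < Xa d},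
        closure (Xset c (3 * δ ^ ((1:ℝ) / (Module.finrank ℝ X : ℝ)))))
    (a : A) (ε : ℝ) (hε : ε ∈ Set.Ioo (0:ℝ) 1) (δ₀ : ℝ) (hδ₀ : 0 < δ₀) :
    ∃ (J : ℕ) (d : Fin J → A) (δ : Fin J → ℝ),
      (∀ j, Xa a ≤ Xa (d j)) ∧ (∀ j, δ j ∈ Set.Ioc (0:ℝ) δ₀) ∧
      (({(0:X)}ᶜ : Set X) \ ⋃ b ∈ {b : A | ¬ Xa a ≤ Xa b}, Xset b ε)
        ⊆ ⋃ j : Fin J, Yset (d j) (δ j) := by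
  obtain ⟨amin, hamin⟩ := hmin
  obtain rfl : Xset = fun b => (Xa b).projCone := funext₂ hXset
  set n := Module.finrank ℝ X
  have hs : 0 < min δ₀ ε := lt_min hδ₀ hε.1
  have hs4 : min δ₀ ε ≤ 4 := (min_le_right _ _).trans (by linarith [hε.2])
  set δ : A → ℝ := fun d => shrinkSeq n (min δ₀ ε) (Module.finrank ℝ (Xa d))
  have hr : ∀ c d, Xa c < Xa d →
      3 * δ d ^ ((1 : ℝ) / n) < ε ∧ 3 * δ d ^ ((1 : ℝ) / n) < δ c := fun c d hcd =>
    have h := three_mul_shrinkSeq_rpow_lt hs (by omega) hs4 (finrank_lt_finrank_of_lt hcd)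
    ⟨h.trans_le ((shrinkSeq_le hs (by omega) hs4 _).trans (min_le_right _ _)), h⟩
  obtain ⟨J, ⟨e⟩⟩ := Finite.exists_equiv_fin {d // Xa a ≤ Xa d}
  refine ⟨J, fun j => e.symm j, fun j => δ (e.symm j), fun j => (e.symm j).2,
    fun j => ⟨shrinkSeq_pos hs _, (shrinkSeq_le hs (by omega) hs4 _).trans (min_le_left _ _)⟩,
    ?_⟩
  rintro x ⟨hx0, hxΓ⟩
  have hΓ : ∀ b, x ∈ (Xa b).projCone ε → Xa a ≤ Xa b := fun b hxb =>
    not_not.1 fun hb => hxΓ (mem_biUnion hb hxb)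
  have htop : x ∈ (Xa amin).projCone (δ amin) :=
    (Xa amin).mem_projCone_of_mem (shrinkSeq_pos hs _) (hamin ▸ mem_top) hx0
  obtain ⟨d, had, hxd⟩ := exists_mem_projCone_diff_closure Xa a δ _ hr hx0 hΓ
    (hamin ▸ le_top) htop
  exact mem_iUnion.2 ⟨e ⟨d, had⟩, by simpa [hYset] using hxd⟩

/-- In the setting of Statement 2, the covering of `Γ_a(ε)` can be taken
finite: there are `J ∈ ℕ`, indices `d_1, …, d_J ≤ a` and numbers `δ_1, …, δ_J ∈ (0,δ₀]`
with `Γ_a(ε) ⊆ ⋃_{j ≤ J} Y_{d_j}(δ_j)`. -/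
theorem stmt3 {X : Type*} [NormedAddCommGroup X] [InnerProductSpace ℝ X]
    [FiniteDimensional ℝ X] (hn : 1 ≤ Module.finrank ℝ X)
    {A : Type*} [Finite A] (Xa : A → Submodule ℝ X)
    (hinter : ∀ a b : A, ∃ c : A, Xa a ⊓ Xa b = Xa c)
    (hmin : ∃ amin : A, Xa amin = ⊤)
    (Xset : A → ℝ → Set X)
    (hXset : ∀ b η, Xset b η = {y : X | ‖(Submodule.orthogonalProjectionOnto (Xa b) y : X)‖ > (1 - η) * ‖y‖})
    (Yset : A → ℝ → Set X)
    (hYset : ∀ d δ, Yset d δ = Xset d δ \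
      ⋃ c ∈ {c : A | Xa c < Xa d},
        closure (Xset c (3 * δ ^ ((1:ℝ) / (Module.finrank ℝ X : ℝ)))))
    (a : A) (ε : ℝ) (hε : ε ∈ Set.Ioo (0:ℝ) 1) (δ₀ : ℝ) (hδ₀ : 0 < δ₀) :
    ∃ (J : ℕ) (d : Fin J → A) (δ : Fin J → ℝ),
      (∀ j, Xa a ≤ Xa (d j)) ∧ (∀ j, δ j ∈ Set.Ioc (0:ℝ) δ₀) ∧
      (({(0:X)}ᶜ : Set X) \ ⋃ b ∈ {b : A | ¬ Xa a ≤ Xa b}, Xset b ε)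
        ⊆ ⋃ j : Fin J, Yset (d j) (δ j) :=
  stmt3_general hn Xa hmin Xset hXset Yset hYset a ε hε δ₀ hδ₀
end

section
/- Let E be a finite-dimensional real inner product space, μ > 0, C ≥ 0, and let V : E → ℝ be differentiable with |V(w)| ≤ C⟨w⟩^{-μ} and ‖∇V(w)‖ ≤ C⟨w⟩^{-1-μ} for all w ∈ E. Then for every κ ∈ [0,1] there exists a constant C' ≥ 0 (depending only on C, μ, κ) such that for all u, v ∈ E: |V(u+v) − V(u)| ≤ C' · ⟨v⟩^{(μ+2)κ + μ(1−κ)} · ⟨u⟩^{-(1+μ)κ − μ(1−κ)}. In particular (κ = 1): |V(u+v) − V(u)| ≤ C' ⟨v⟩^{μ+2} ⟨u⟩^{-1-μ}, and (κ = 0): |V(u+v) − V(u)| ≤ C' ⟨v⟩^{μ} ⟨u⟩^{-μ}. -/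
/-!
Both endpoint estimates come from Peetre's inequality `⟨u + v⟩⁻ˢ ≤ 2^{s/2} ⟨v⟩ˢ ⟨u⟩⁻ˢ`.
For `κ = 0` apply it to `|V (u + v)|` and bound `|V u|` trivially; for `κ = 1` apply it to the
gradient along the segment from `u` to `u + v` and use the mean value inequality, which costs
one more factor `‖v‖ ≤ ⟨v⟩`. A general `κ ∈ [0, 1]` follows by taking the geometric mean
`d = d^{1-κ} d^κ` of the two bounds.
-/

open Real Set

local notation "⟨" w "⟩ⱼ" => Real.sqrt (1 + ‖w‖ ^ 2)

section JapaneseBracket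

variable {E : Type*} [SeminormedAddCommGroup E]

lemma one_le_sqrt_one_add_norm_sq (w : E) : 1 ≤ ⟨w⟩ⱼ :=
  one_le_sqrt.mpr (by nlinarith [sq_nonneg ‖w‖])

lemma norm_le_sqrt_one_add_norm_sq (w : E) : ‖w‖ ≤ ⟨w⟩ⱼ :=
  le_sqrt_of_sq_le (by linarith)

lemma sqrt_one_add_norm_sq_le_of_norm_le {v w : E} (h : ‖v‖ ≤ ‖w‖) : ⟨v⟩ⱼ ≤ ⟨w⟩ⱼ :=
  sqrt_le_sqrt (by gcongr)

lemma sqrt_one_add_norm_add_sq_le (v w : E) : ⟨v + w⟩ⱼ ≤ √2 * ⟨v⟩ⱼ * ⟨w⟩ⱼ := by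
  rw [← sqrt_mul zero_le_two, ← sqrt_mul (by positivity)]
  refine sqrt_le_sqrt ?_
  have htri := norm_add_le v w
  nlinarith [norm_nonneg v, norm_nonneg w, norm_nonneg (v + w), sq_nonneg (‖v‖ - ‖w‖),
    mul_nonneg (sq_nonneg ‖v‖) (sq_nonneg ‖w‖)]

lemma sqrt_one_add_norm_add_sq_rpow_neg_le (u v : E) {s : ℝ} (hs : 0 ≤ s) :
    ⟨u + v⟩ⱼ ^ (-s) ≤ (2 : ℝ) ^ (s / 2) * ⟨v⟩ⱼ ^ s * ⟨u⟩ⱼ ^ (-s) := by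
  have hu : ⟨u⟩ⱼ ≤ √2 * ⟨u + v⟩ⱼ * ⟨v⟩ⱼ := by
    simpa using sqrt_one_add_norm_add_sq_le (u + v) (-v)
  have hinv : ⟨u + v⟩ⱼ⁻¹ ≤ √2 * ⟨v⟩ⱼ * ⟨u⟩ⱼ⁻¹ := by
    rw [inv_le_iff_one_le_mul₀ (by positivity)]
    calc 1 = ⟨u⟩ⱼ * ⟨u⟩ⱼ⁻¹ := (mul_inv_cancel₀ (by positivity)).symm
      _ ≤ √2 * ⟨u + v⟩ⱼ * ⟨v⟩ⱼ * ⟨u⟩ⱼ⁻¹ := by gcongr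
      _ = √2 * ⟨v⟩ⱼ * ⟨u⟩ⱼ⁻¹ * ⟨u + v⟩ⱼ := by ring
  have hsqrt : √2 ^ s = (2 : ℝ) ^ (s / 2) := by
    rw [sqrt_eq_rpow, ← rpow_mul zero_le_two, one_div_mul_eq_div]
  calc ⟨u + v⟩ⱼ ^ (-s) = (⟨u + v⟩ⱼ⁻¹) ^ s := by rw [rpow_neg (by positivity), inv_rpow (by positivity)]
    _ ≤ (√2 * ⟨v⟩ⱼ * ⟨u⟩ⱼ⁻¹) ^ s := rpow_le_rpow (by positivity) hinv hs
    _ = (2 : ℝ) ^ (s / 2) * ⟨v⟩ⱼ ^ s * ⟨u⟩ⱼ ^ (-s) := by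
      rw [mul_rpow (by positivity) (by positivity), mul_rpow (by positivity) (by positivity),
        hsqrt, inv_rpow (by positivity), rpow_neg (by positivity)]

end JapaneseBracket

section Increments

variable {E : Type*} {V : E → ℝ} {C s : ℝ}

lemma abs_sub_le_of_abs_le_rpow_neg [SeminormedAddCommGroup E] (hC : 0 ≤ C) (hs : 0 ≤ s)
    (hV : ∀ w, |V w| ≤ C * ⟨w⟩ⱼ ^ (-s)) (u v : E) :
    |V (u + v) - V u| ≤ C * ((2 : ℝ) ^ (s / 2) + 1) * ⟨v⟩ⱼ ^ s * ⟨u⟩ⱼ ^ (-s) := by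
  have hvs : 1 ≤ ⟨v⟩ⱼ ^ s := one_le_rpow (one_le_sqrt_one_add_norm_sq v) hs
  calc |V (u + v) - V u| ≤ |V (u + v)| + |V u| := abs_sub _ _
    _ ≤ C * ((2 : ℝ) ^ (s / 2) * ⟨v⟩ⱼ ^ s * ⟨u⟩ⱼ ^ (-s)) + C * (⟨v⟩ⱼ ^ s * ⟨u⟩ⱼ ^ (-s)) := by
      gcongr
      · exact (hV _).trans (by gcongr; exact sqrt_one_add_norm_add_sq_rpow_neg_le u v hs)
      · exact (hV _).trans (by gcongr; exact le_mul_of_one_le_left (by positivity) hvs)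
    _ = C * ((2 : ℝ) ^ (s / 2) + 1) * ⟨v⟩ⱼ ^ s * ⟨u⟩ⱼ ^ (-s) := by ring

lemma abs_sub_le_of_norm_fderiv_le_rpow_neg [NormedAddCommGroup E] [NormedSpace ℝ E]
    (hC : 0 ≤ C) (hs : 0 ≤ s) (hV : Differentiable ℝ V)
    (hV' : ∀ w, ‖fderiv ℝ V w‖ ≤ C * ⟨w⟩ⱼ ^ (-s)) (u v : E) :
    |V (u + v) - V u| ≤ C * (2 : ℝ) ^ (s / 2) * ⟨v⟩ⱼ ^ (s + 1) * ⟨u⟩ⱼ ^ (-s) := by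
  have hsegment : ∀ x ∈ segment ℝ u (u + v),
      ‖fderiv ℝ V x‖ ≤ C * (2 : ℝ) ^ (s / 2) * ⟨v⟩ⱼ ^ s * ⟨u⟩ⱼ ^ (-s) := by
    rw [segment_eq_image', add_sub_cancel_left]
    rintro _ ⟨t, ⟨ht₀, ht₁⟩, rfl⟩
    have htv : ⟨t • v⟩ⱼ ≤ ⟨v⟩ⱼ := sqrt_one_add_norm_sq_le_of_norm_le <| by
      rw [norm_smul, norm_of_nonneg ht₀]
      exact mul_le_of_le_one_left (norm_nonneg v) ht₁
    calc ‖fderiv ℝ V (u + t • v)‖ ≤ C * ⟨u + t • v⟩ⱼ ^ (-s) := hV' _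
      _ ≤ C * ((2 : ℝ) ^ (s / 2) * ⟨t • v⟩ⱼ ^ s * ⟨u⟩ⱼ ^ (-s)) := by
        gcongr; exact sqrt_one_add_norm_add_sq_rpow_neg_le u (t • v) hs
      _ ≤ C * ((2 : ℝ) ^ (s / 2) * ⟨v⟩ⱼ ^ s * ⟨u⟩ⱼ ^ (-s)) := by gcongr
      _ = C * (2 : ℝ) ^ (s / 2) * ⟨v⟩ⱼ ^ s * ⟨u⟩ⱼ ^ (-s) := by ring
  have hmvt := (convex_segment u (u + v)).norm_image_sub_le_of_norm_fderiv_le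
    (fun x _ => hV x) hsegment (left_mem_segment ℝ u (u + v)) (right_mem_segment ℝ u (u + v))
  rw [norm_eq_abs, add_sub_cancel_left] at hmvt
  calc |V (u + v) - V u| ≤ C * (2 : ℝ) ^ (s / 2) * ⟨v⟩ⱼ ^ s * ⟨u⟩ⱼ ^ (-s) * ‖v‖ := hmvt
    _ ≤ C * (2 : ℝ) ^ (s / 2) * ⟨v⟩ⱼ ^ s * ⟨u⟩ⱼ ^ (-s) * ⟨v⟩ⱼ := by
      gcongr; exact norm_le_sqrt_one_add_norm_sq v
    _ = C * (2 : ℝ) ^ (s / 2) * ⟨v⟩ⱼ ^ (s + 1) * ⟨u⟩ⱼ ^ (-s) := by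
      rw [rpow_add_one (by positivity)]; ring

end Increments

section Interpolation

variable {d A B κ : ℝ}

lemma le_rpow_mul_rpow_of_le_of_le (hd : 0 ≤ d) (hκ : κ ∈ Icc (0 : ℝ) 1)
    (hA : d ≤ A) (hB : d ≤ B) : d ≤ A ^ (1 - κ) * B ^ κ :=
  calc d = d ^ (1 - κ) * d ^ κ := by rw [← rpow_add' hd (by norm_num), sub_add_cancel, rpow_one]
    _ ≤ A ^ (1 - κ) * B ^ κ :=
      mul_le_mul (rpow_le_rpow hd hA (sub_nonneg.mpr hκ.2)) (rpow_le_rpow hd hB hκ.1)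
        (rpow_nonneg hd κ) (rpow_nonneg (hd.trans hA) _)

lemma le_interpolated_of_le_of_le {c₀ c₁ a b p₀ p₁ q₀ q₁ : ℝ} (hd : 0 ≤ d)
    (hc₀ : 0 ≤ c₀) (hc₁ : 0 ≤ c₁) (ha : 0 < a) (hb : 0 < b) (hκ : κ ∈ Icc (0 : ℝ) 1)
    (h₀ : d ≤ c₀ * a ^ p₀ * b ^ q₀) (h₁ : d ≤ c₁ * a ^ p₁ * b ^ q₁) :
    d ≤ c₀ ^ (1 - κ) * c₁ ^ κ * a ^ (p₁ * κ + p₀ * (1 - κ)) * b ^ (q₁ * κ + q₀ * (1 - κ)) := by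
  refine (le_rpow_mul_rpow_of_le_of_le hd hκ h₀ h₁).trans_eq ?_
  rw [mul_rpow (by positivity) (by positivity), mul_rpow hc₀ (by positivity),
    mul_rpow (by positivity) (by positivity), mul_rpow hc₁ (by positivity),
    rpow_add ha, rpow_add hb, rpow_mul ha.le, rpow_mul ha.le, rpow_mul hb.le, rpow_mul hb.le]
  ring

end Interpolation

/-- Let `E` be a finite-dimensional real inner product space, `μ > 0`,
`C ≥ 0`, and `V : E → ℝ` differentiable with `|V(w)| ≤ C⟨w⟩^{-μ}` and
`‖∇V(w)‖ ≤ C⟨w⟩^{-1-μ}` (Japanese bracket `⟨w⟩ = (1+‖w‖²)^{1/2}`).  Then for every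
`κ ∈ [0,1]` there is `C' ≥ 0` with
`|V(u+v) − V(u)| ≤ C' ⟨v⟩^{(μ+2)κ + μ(1-κ)} ⟨u⟩^{-(1+μ)κ - μ(1-κ)}` for all `u, v ∈ E`. -/
theorem stmt6 {E : Type*} [NormedAddCommGroup E] [InnerProductSpace ℝ E]
    [FiniteDimensional ℝ E] (μ C : ℝ) (hμ : 0 < μ) (hC : 0 ≤ C)
    (V : E → ℝ) (hV : Differentiable ℝ V)
    (hVb : ∀ w : E, |V w| ≤ C * (Real.sqrt (1 + ‖w‖ ^ 2)) ^ (-μ))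
    (hVg : ∀ w : E, ‖gradient V w‖ ≤ C * (Real.sqrt (1 + ‖w‖ ^ 2)) ^ (-1 - μ)) :
    ∀ κ ∈ Set.Icc (0:ℝ) 1, ∃ C' : ℝ, 0 ≤ C' ∧ ∀ u v : E,
      |V (u + v) - V u|
        ≤ C' * (Real.sqrt (1 + ‖v‖ ^ 2)) ^ ((μ + 2) * κ + μ * (1 - κ))
          * (Real.sqrt (1 + ‖u‖ ^ 2)) ^ (-(1 + μ) * κ - μ * (1 - κ)) := by
  intro κ hκ
  have hfderiv : ∀ w, ‖fderiv ℝ V w‖ ≤ C * ⟨w⟩ⱼ ^ (-(1 + μ)) := fun w => by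
    rw [← (InnerProductSpace.toDual ℝ E).symm.norm_map, neg_add']
    exact hVg w
  have h₀ := abs_sub_le_of_abs_le_rpow_neg hC hμ.le hVb
  have h₁ := abs_sub_le_of_norm_fderiv_le_rpow_neg hC (by linarith) hV hfderiv
  refine ⟨(C * ((2 : ℝ) ^ (μ / 2) + 1)) ^ (1 - κ) * (C * (2 : ℝ) ^ ((1 + μ) / 2)) ^ κ,
    by positivity, fun u v => ?_⟩
  have h := le_interpolated_of_le_of_le (abs_nonneg _) (by positivity) (by positivity)
    (by positivity) (by positivity) hκ (h₀ u v) (h₁ u v)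
  rw [show 1 + μ + 1 = μ + 2 by ring, show -(1 + μ) * κ + -μ * (1 - κ)
    = -(1 + μ) * κ - μ * (1 - κ) by ring] at h
  exact h
end

section
/- Let n ≥ 1, μ ∈ (1/2, 1), C₀, C₁ ≥ 0, and let I : ℝⁿ → ℝ be differentiable with ‖∇I(w)‖ ≤ C₀⟨w⟩^{-1-μ} for all w ∈ ℝⁿ. Let ξ ∈ ℝⁿ with ξ ≠ 0, and let y : [1,∞) → ℝⁿ be continuous with ‖y(s) − 2sξ‖ ≤ C₁ s^{1−μ} for all s ≥ 1. Then the function s ↦ I(y(s)) − I(2sξ) is (absolutely) Lebesgue integrable on [1,∞). -/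
/-!
For large `s` the segment from `2sξ` to `y(s)` has length `O(s^{1-μ}) = o(s)`, so it stays at
distance at least `s‖ξ‖` from the origin, where `‖∇I‖ = O(s^{-1-μ})`. The mean value
inequality then gives `|I(y(s)) - I(2sξ)| = O(s^{-2μ})`, which is integrable at infinity
because `2μ > 1`; near `s = 1` the integrand is continuous, hence locally integrable.
-/

open Real MeasureTheory Set Filter Asymptotics Topology

lemma eventually_mul_rpow_one_sub_le_mul (C : ℝ) {c μ : ℝ} (hc : 0 < c) (hμ : 0 < μ) :
    ∀ᶠ s : ℝ in atTop, C * s ^ (1 - μ) ≤ c * s := by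
  have hlim : Tendsto (fun s : ℝ => C * s ^ (-μ)) atTop (𝓝 0) := by
    simpa using (tendsto_rpow_neg_atTop hμ).const_mul C
  filter_upwards [hlim.eventually (gt_mem_nhds hc), eventually_gt_atTop 0] with s hs hs₀
  calc C * s ^ (1 - μ) = C * s ^ (-μ) * s := by
        rw [sub_eq_neg_add, rpow_add hs₀, rpow_one, mul_assoc]
    _ ≤ c * s := mul_le_mul_of_nonneg_right hs.le hs₀.le

lemma sqrt_one_add_sq_norm_rpow_le {E : Type*} [NormedAddCommGroup E] {w : E} {t q : ℝ}
    (ht : 0 < t) (htw : t ≤ ‖w‖) (hq : q ≤ 0) : √(1 + ‖w‖ ^ 2) ^ q ≤ t ^ q := by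
  refine rpow_le_rpow_of_nonpos ht (htw.trans ?_) hq
  calc ‖w‖ = √(‖w‖ ^ 2) := (sqrt_sq (norm_nonneg w)).symm
    _ ≤ √(1 + ‖w‖ ^ 2) := sqrt_le_sqrt (by linarith)

section Estimates

variable {E F : Type*} [NormedAddCommGroup E] [NormedSpace ℝ E]
  [NormedAddCommGroup F] [NormedSpace ℝ F]

lemma sub_le_norm_of_mem_segment {a b w : E} {r : ℝ} (hab : ‖b - a‖ ≤ r)
    (hw : w ∈ segment ℝ a b) : ‖a‖ - r ≤ ‖w‖ := by
  have hr : 0 ≤ r := (norm_nonneg _).trans hab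
  have hwa : dist w a ≤ r :=
    (convex_closedBall a r).segment_subset (Metric.mem_closedBall_self hr)
      (by rwa [Metric.mem_closedBall, dist_eq_norm]) hw
  rw [dist_eq_norm] at hwa
  linarith [norm_sub_norm_le a w, norm_sub_rev a w]

lemma norm_sub_le_of_norm_fderiv_le_of_sub_le_norm {f : E → F} (hf : Differentiable ℝ f)
    {a b : E} {r M : ℝ} (hab : ‖b - a‖ ≤ r)
    (hM : ∀ w, ‖a‖ - r ≤ ‖w‖ → ‖fderiv ℝ f w‖ ≤ M) :
    ‖f b - f a‖ ≤ M * r := by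
  have hr : 0 ≤ r := (norm_nonneg _).trans hab
  have hM₀ : 0 ≤ M := (norm_nonneg _).trans (hM a (by linarith))
  calc ‖f b - f a‖ ≤ M * ‖b - a‖ :=
        (convex_segment a b).norm_image_sub_le_of_norm_fderiv_le (fun w _ => hf w)
          (fun w hw => hM w (sub_le_norm_of_mem_segment hab hw))
          (left_mem_segment ℝ a b) (right_mem_segment ℝ a b)
    _ ≤ M * r := mul_le_mul_of_nonneg_left hab hM₀

theorem isBigO_sub_comp_smul_of_norm_fderiv_le {f : E → F} (hf : Differentiable ℝ f)
    {C₀ C₁ μ : ℝ} (hC₀ : 0 ≤ C₀) (hμ : 0 < μ)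
    (hf' : ∀ w, ‖fderiv ℝ f w‖ ≤ C₀ * √(1 + ‖w‖ ^ 2) ^ (-1 - μ))
    {η : E} (hη : η ≠ 0) {y : ℝ → E}
    (hy : ∀ᶠ s in atTop, ‖y s - s • η‖ ≤ C₁ * s ^ (1 - μ)) :
    (fun s => f (y s) - f (s • η)) =O[atTop] fun s => s ^ (-(2 * μ)) := by
  set c := ‖η‖ / 2
  have hc : 0 < c := half_pos (norm_pos_iff.mpr hη)
  refine IsBigO.of_bound (C₀ * c ^ (-1 - μ) * C₁) ?_
  filter_upwards [hy, eventually_mul_rpow_one_sub_le_mul C₁ hc hμ, eventually_gt_atTop 0]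
    with s hys hsmall hs
  have hcs : 0 < c * s := mul_pos hc hs
  have hfar : ∀ w, ‖s • η‖ - C₁ * s ^ (1 - μ) ≤ ‖w‖ →
      ‖fderiv ℝ f w‖ ≤ C₀ * (c * s) ^ (-1 - μ) := by
    intro w hw
    have hnorm : ‖s • η‖ = 2 * (c * s) := by
      rw [norm_smul, norm_of_nonneg hs.le]; ring
    exact (hf' w).trans <| mul_le_mul_of_nonneg_left
      (sqrt_one_add_sq_norm_rpow_le hcs (by linarith) (by linarith)) hC₀
  calc ‖f (y s) - f (s • η)‖ ≤ C₀ * (c * s) ^ (-1 - μ) * (C₁ * s ^ (1 - μ)) :=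
        norm_sub_le_of_norm_fderiv_le_of_sub_le_norm hf hys hfar
    _ = C₀ * c ^ (-1 - μ) * C₁ * (s ^ (-1 - μ) * s ^ (1 - μ)) := by
        rw [mul_rpow hc.le hs.le]; ring
    _ = C₀ * c ^ (-1 - μ) * C₁ * ‖s ^ (-(2 * μ))‖ := by
        rw [← rpow_add hs, norm_of_nonneg (rpow_nonneg hs.le _)]; ring_nf

end Estimates

lemma norm_fderiv_eq_norm_gradient {E : Type*} [NormedAddCommGroup E] [InnerProductSpace ℝ E]
    [CompleteSpace E] (f : E → ℝ) (w : E) : ‖fderiv ℝ f w‖ = ‖gradient f w‖ := by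
  rw [gradient, LinearIsometryEquiv.norm_map]

theorem stmt7_general (n : ℕ) (μ : ℝ) (hμ : μ ∈ Set.Ioo (1/2 : ℝ) 1)
    (C₀ C₁ : ℝ) (hC₀ : 0 ≤ C₀)
    (I : EuclideanSpace ℝ (Fin n) → ℝ) (hI : Differentiable ℝ I)
    (hIg : ∀ w, ‖gradient I w‖ ≤ C₀ * (Real.sqrt (1 + ‖w‖ ^ 2)) ^ (-1 - μ))
    (ξ : EuclideanSpace ℝ (Fin n)) (hξ : ξ ≠ 0)
    (y : ℝ → EuclideanSpace ℝ (Fin n)) (hy : ContinuousOn y (Set.Ici (1:ℝ)))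
    (hyb : ∀ s : ℝ, 1 ≤ s → ‖y s - (2 * s) • ξ‖ ≤ C₁ * s ^ (1 - μ)) :
    MeasureTheory.IntegrableOn (fun s : ℝ => I (y s) - I ((2 * s) • ξ))
      (Set.Ici (1:ℝ)) := by
  have hsmul : ∀ s : ℝ, (2 * s) • ξ = s • (2 : ℝ) • ξ := fun s => by rw [mul_comm, mul_smul]
  have hcont : ContinuousOn (fun s : ℝ => I (y s) - I ((2 * s) • ξ)) (Ici 1) :=
    (hI.continuous.comp_continuousOn hy).sub (hI.continuous.comp (by fun_prop)).continuousOn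
  have hbigO : (fun s : ℝ => I (y s) - I ((2 * s) • ξ)) =O[atTop] fun s => s ^ (-(2 * μ)) := by
    simp only [hsmul]
    refine isBigO_sub_comp_smul_of_norm_fderiv_le (C₁ := C₁) hI hC₀ (by linarith [hμ.1])
      (fun w => (norm_fderiv_eq_norm_gradient I w).trans_le (hIg w))
      (smul_ne_zero (two_ne_zero (α := ℝ)) hξ) ?_
    filter_upwards [eventually_ge_atTop 1] with s hs
    simpa only [hsmul] using hyb s hs
  exact (hcont.locallyIntegrableOn measurableSet_Ici).integrableOn_of_isBigO_atTop hbigO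
    (integrableAtFilter_rpow_atTop_iff.mpr (by linarith [hμ.1]))

/-- Let `n ≥ 1`, `μ ∈ (1/2, 1)`, `C₀, C₁ ≥ 0`, and `I : ℝⁿ → ℝ`
differentiable with `‖∇I(w)‖ ≤ C₀⟨w⟩^{-1-μ}`.  Let `ξ ≠ 0` and let `y : [1,∞) → ℝⁿ`
be continuous with `‖y(s) − 2sξ‖ ≤ C₁ s^{1-μ}` for `s ≥ 1`.  Then
`s ↦ I(y(s)) − I(2sξ)` is Lebesgue integrable on `[1,∞)`. -/
theorem stmt7 (n : ℕ) (hn : 1 ≤ n) (μ : ℝ) (hμ : μ ∈ Set.Ioo (1/2 : ℝ) 1)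
    (C₀ C₁ : ℝ) (hC₀ : 0 ≤ C₀) (hC₁ : 0 ≤ C₁)
    (I : EuclideanSpace ℝ (Fin n) → ℝ) (hI : Differentiable ℝ I)
    (hIg : ∀ w, ‖gradient I w‖ ≤ C₀ * (Real.sqrt (1 + ‖w‖ ^ 2)) ^ (-1 - μ))
    (ξ : EuclideanSpace ℝ (Fin n)) (hξ : ξ ≠ 0)
    (y : ℝ → EuclideanSpace ℝ (Fin n)) (hy : ContinuousOn y (Set.Ici (1:ℝ)))
    (hyb : ∀ s : ℝ, 1 ≤ s → ‖y s - (2 * s) • ξ‖ ≤ C₁ * s ^ (1 - μ)) :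
    MeasureTheory.IntegrableOn (fun s : ℝ => I (y s) - I ((2 * s) • ξ))
      (Set.Ici (1:ℝ)) :=
  stmt7_general n μ hμ C₀ C₁ hC₀ I hI hIg ξ hξ y hy hyb
end

section
/- For all ε > 0 and all λ, λ'' ∈ ℝ, the function λ' ↦ [π^{-1} ε/((λ−λ')² + ε²)] · [π^{-1} ε/((λ'−λ'')² + ε²)] is Lebesgue integrable on ℝ and ∫_ℝ π^{-1} ε/((λ−λ')² + ε²) · π^{-1} ε/((λ'−λ'')² + ε²) dλ' = π^{-1} · 2ε/((λ−λ'')² + 4ε²). (In the notation δ_{ε,λ}(λ') := π^{-1} ε/((λ−λ')² + ε²): ∫ δ_{ε,λ'}(λ) δ_{ε,λ''}(λ') dλ' = δ_{2ε,λ''}(λ).) -/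
/-!
Up to the factor `π⁻² ε²`, the integrand is `(((a - x)² + ε²)((x - b)² + ε²))⁻¹`, and the
substitution `x ↦ b + ε x` turns its integral into `ε⁻³ I(c)`, where
`I(c) = ∫ dx / (((x - c)² + 1)(x² + 1))` and `c = (a - b) / ε`. For `c ≠ 0`, partial fractions
give an antiderivative made of a logarithmic term and two arctangents, whose limits at `±∞`
differ by `2π / (c² + 4)`. The antiderivative degenerates at `c = 0`; that case follows because
`I` is continuous, by dominated convergence with the bound `(1 + x²)⁻¹`.
-/

open Real MeasureTheory Filter Topology

theorem norm_inv_mul_sq_add_one_le (c x : ℝ) :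
    ‖(((x - c) ^ 2 + 1) * (x ^ 2 + 1))⁻¹‖ ≤ (1 + x ^ 2)⁻¹ := by
  rw [norm_inv, Real.norm_of_nonneg (by positivity), add_comm 1]
  exact inv_anti₀ (by positivity) (le_mul_of_one_le_left (by positivity) (by nlinarith))

theorem integrable_inv_mul_sq_add_one (c : ℝ) :
    Integrable fun x : ℝ => (((x - c) ^ 2 + 1) * (x ^ 2 + 1))⁻¹ :=
  integrable_inv_one_add_sq.mono' (by fun_prop) (ae_of_all _ (norm_inv_mul_sq_add_one_le c))

theorem tendsto_log_sq_add_one_sub_log_cobounded (c : ℝ) :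
    Tendsto (fun x : ℝ => log (x ^ 2 + 1) - log ((x - c) ^ 2 + 1))
      (Bornology.cobounded ℝ) (𝓝 0) := by
  have hinv := tendsto_inv₀_cobounded (α := ℝ)
  have hratio : Tendsto (fun x : ℝ => (x ^ 2 + 1) / ((x - c) ^ 2 + 1))
      (Bornology.cobounded ℝ) (𝓝 1) := by
    have h : Tendsto (fun x : ℝ => (1 + x⁻¹ ^ 2) / ((1 - c * x⁻¹) ^ 2 + x⁻¹ ^ 2))
        (Bornology.cobounded ℝ) (𝓝 1) := by
      have hone := tendsto_const_nhds (x := (1 : ℝ)) (f := Bornology.cobounded ℝ)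
      convert (hone.add (hinv.pow 2)).div (((hone.sub (hinv.const_mul c)).pow 2).add (hinv.pow 2))
        (by simp) using 2 <;> simp
    refine h.congr' ((Bornology.eventually_ne_cobounded 0).mono fun x hx => ?_)
    field_simp
  simpa using ((continuousAt_log one_ne_zero).tendsto.comp hratio).congr
    fun x => log_div (by positivity) (by positivity)

noncomputable def cauchyConvPrimitive (c x : ℝ) : ℝ :=
  ((log (x ^ 2 + 1) - log ((x - c) ^ 2 + 1)) / c + arctan x + arctan (x - c)) / (c ^ 2 + 4)

theorem hasDerivAt_cauchyConvPrimitive {c : ℝ} (hc : c ≠ 0) (x : ℝ) :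
    HasDerivAt (cauchyConvPrimitive c) (((x - c) ^ 2 + 1) * (x ^ 2 + 1))⁻¹ x := by
  have hshift : HasDerivAt (fun x => x - c) 1 x := (hasDerivAt_id x).sub_const c
  have hsq : HasDerivAt (fun x => x ^ 2 + 1) (2 * x) x := by
    simpa using (hasDerivAt_pow 2 x).add_const 1
  have hsq_shift : HasDerivAt (fun x => (x - c) ^ 2 + 1) (2 * (x - c)) x := by
    simpa using (hshift.pow 2).add_const 1
  have h := (((((hsq.log (by positivity)).sub (hsq_shift.log (by positivity))).div_const c).add
    (hasDerivAt_arctan x)).add ((hasDerivAt_arctan (x - c)).comp x hshift)).div_const (c ^ 2 + 4)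
  refine h.congr_deriv ?_
  have : (x - c) ^ 2 + 1 ≠ 0 := by positivity
  field_simp
  ring

theorem tendsto_cauchyConvPrimitive_atTop {c : ℝ} :
    Tendsto (cauchyConvPrimitive c) atTop (𝓝 (π / (c ^ 2 + 4))) := by
  have hlog := (tendsto_log_sq_add_one_sub_log_cobounded c).mono_left
    IsOrderBornology.atTop_le_cobounded
  have harctan := tendsto_nhds_of_tendsto_nhdsWithin tendsto_arctan_atTop
  have hshift := harctan.comp (tendsto_atTop_add_const_right _ (-c) tendsto_id)
  convert ((hlog.div_const c).add harctan).add hshift |>.div_const (c ^ 2 + 4) using 2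
  · simp [cauchyConvPrimitive, sub_eq_add_neg]
  · ring

theorem tendsto_cauchyConvPrimitive_atBot {c : ℝ} :
    Tendsto (cauchyConvPrimitive c) atBot (𝓝 (-π / (c ^ 2 + 4))) := by
  have hlog := (tendsto_log_sq_add_one_sub_log_cobounded c).mono_left
    IsOrderBornology.atBot_le_cobounded
  have harctan := tendsto_nhds_of_tendsto_nhdsWithin tendsto_arctan_atBot
  have hshift := harctan.comp (tendsto_atBot_add_const_right _ (-c) tendsto_id)
  convert ((hlog.div_const c).add harctan).add hshift |>.div_const (c ^ 2 + 4) using 2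
  · simp [cauchyConvPrimitive, sub_eq_add_neg]
  · ring

theorem integral_inv_mul_sq_add_one_of_ne_zero {c : ℝ} (hc : c ≠ 0) :
    ∫ x : ℝ, (((x - c) ^ 2 + 1) * (x ^ 2 + 1))⁻¹ = 2 * π / (c ^ 2 + 4) := by
  rw [integral_of_hasDerivAt_of_tendsto (hasDerivAt_cauchyConvPrimitive hc)
    (integrable_inv_mul_sq_add_one c) tendsto_cauchyConvPrimitive_atBot
    tendsto_cauchyConvPrimitive_atTop]
  ring

theorem continuous_integral_inv_mul_sq_add_one :
    Continuous fun c : ℝ => ∫ x : ℝ, (((x - c) ^ 2 + 1) * (x ^ 2 + 1))⁻¹ :=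
  continuous_of_dominated (fun c => (integrable_inv_mul_sq_add_one c).1)
    (fun c => ae_of_all _ (norm_inv_mul_sq_add_one_le c)) integrable_inv_one_add_sq
    (ae_of_all _ fun _ => Continuous.inv₀ (by fun_prop) fun _ => by positivity)

theorem integral_inv_mul_sq_add_one (c : ℝ) :
    ∫ x : ℝ, (((x - c) ^ 2 + 1) * (x ^ 2 + 1))⁻¹ = 2 * π / (c ^ 2 + 4) :=
  congrFun (continuous_integral_inv_mul_sq_add_one.ext_on (dense_compl_singleton 0)
    (by fun_prop (disch := intro; positivity))
    fun _ hc => integral_inv_mul_sq_add_one_of_ne_zero hc) c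

theorem inv_mul_sq_add_sq_eq {ε : ℝ} (hε : ε ≠ 0) (a b x : ℝ) :
    (((a - x) ^ 2 + ε ^ 2) * ((x - b) ^ 2 + ε ^ 2))⁻¹ =
      (ε ^ 4)⁻¹ * ((((x - b) / ε - (a - b) / ε) ^ 2 + 1) * (((x - b) / ε) ^ 2 + 1))⁻¹ := by
  field_simp
  ring

theorem integrable_inv_mul_sq_add_sq {ε : ℝ} (hε : ε ≠ 0) (a b : ℝ) :
    Integrable fun x : ℝ => (((a - x) ^ 2 + ε ^ 2) * ((x - b) ^ 2 + ε ^ 2))⁻¹ := by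
  simp_rw [inv_mul_sq_add_sq_eq hε]
  exact (((integrable_inv_mul_sq_add_one _).comp_div hε).comp_sub_right b).const_mul _

theorem integral_inv_mul_sq_add_sq {ε : ℝ} (hε : 0 < ε) (a b : ℝ) :
    ∫ x : ℝ, (((a - x) ^ 2 + ε ^ 2) * ((x - b) ^ 2 + ε ^ 2))⁻¹ =
      2 * π / (ε * ((a - b) ^ 2 + 4 * ε ^ 2)) := by
  simp_rw [inv_mul_sq_add_sq_eq hε.ne', integral_const_mul]
  rw [integral_sub_right_eq_self
      (fun y => (((y / ε - (a - b) / ε) ^ 2 + 1) * ((y / ε) ^ 2 + 1))⁻¹),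
    Measure.integral_comp_div (fun y => (((y - (a - b) / ε) ^ 2 + 1) * (y ^ 2 + 1))⁻¹),
    integral_inv_mul_sq_add_one, abs_of_pos hε, smul_eq_mul]
  field_simp

/-- With `δ_{ε,λ}(λ') = π⁻¹ ε / ((λ−λ')² + ε²)`, for all `ε > 0` and
`λ, λ'' ∈ ℝ` the function `λ' ↦ δ_{ε,λ'}(λ) · δ_{ε,λ''}(λ')` is Lebesgue integrable on `ℝ`
and `∫ δ_{ε,λ'}(λ) δ_{ε,λ''}(λ') dλ' = δ_{2ε,λ''}(λ)`. -/
theorem stmt9 (ε : ℝ) (hε : 0 < ε) (lam lam'' : ℝ) :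
    Integrable (fun lam' : ℝ =>
      (π⁻¹ * ε / ((lam - lam') ^ 2 + ε ^ 2)) *
        (π⁻¹ * ε / ((lam' - lam'') ^ 2 + ε ^ 2)))
    ∧ ∫ lam' : ℝ,
        (π⁻¹ * ε / ((lam - lam') ^ 2 + ε ^ 2)) *
          (π⁻¹ * ε / ((lam' - lam'') ^ 2 + ε ^ 2))
        = π⁻¹ * (2 * ε) / ((lam - lam'') ^ 2 + 4 * ε ^ 2) := by
  have hprod : ∀ x, (π⁻¹ * ε / ((lam - x) ^ 2 + ε ^ 2)) * (π⁻¹ * ε / ((x - lam'') ^ 2 + ε ^ 2)) =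
      (π⁻¹ * ε) ^ 2 * (((lam - x) ^ 2 + ε ^ 2) * ((x - lam'') ^ 2 + ε ^ 2))⁻¹ := fun x => by
    rw [mul_inv]
    ring
  simp_rw [hprod, integral_const_mul, integral_inv_mul_sq_add_sq hε]
  refine ⟨(integrable_inv_mul_sq_add_sq hε.ne' lam lam'').const_mul _, ?_⟩
  field_simp
end

section
/- Let H be a complex Hilbert space, I ⊆ ℝ a nonempty open interval, v : I → H weakly continuous (i.e. for every w ∈ H the map λ ↦ ⟪w, v(λ)⟫ is continuous on I), and g : I → ℝ continuous. If ‖v(λ)‖² ≤ g(λ) for Lebesgue-almost every λ ∈ I, then ‖v(λ)‖² ≤ g(λ) for every λ ∈ I. -/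
/-!
The squared norm is weakly lower semicontinuous: if `⟪x, f a⟫ → ⟪x, x⟫` then
`‖x‖⁴ = lim |⟪x, f a⟫|² ≤ ‖x‖² · liminf ‖f a‖²`. Since the exceptional set of the a.e. bound is
null and `I` is open, every `λ₀ ∈ I` is a limit of points `λ ∈ I` where the bound holds; along
them `v λ → v λ₀` weakly and `g λ → g λ₀`.
-/

open MeasureTheory Filter Topology

theorem norm_sq_le_of_tendsto_inner_self {𝕜 E α : Type*} [RCLike 𝕜] [NormedAddCommGroup E]
    [InnerProductSpace 𝕜 E] {l : Filter α} [l.NeBot] {f : α → E} {x : E} {c : α → ℝ} {c₀ : ℝ}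
    (hf : Tendsto (fun a => inner 𝕜 x (f a)) l (𝓝 (inner 𝕜 x x))) (hc : Tendsto c l (𝓝 c₀))
    (hle : ∀ᶠ a in l, ‖f a‖ ^ 2 ≤ c a) :
    ‖x‖ ^ 2 ≤ c₀ := by
  have hc₀ : 0 ≤ c₀ := ge_of_tendsto hc (hle.mono fun a ha => (sq_nonneg _).trans ha)
  have hnorm : ‖(inner 𝕜 x x : 𝕜)‖ = ‖x‖ ^ 2 := by simp [inner_self_eq_norm_sq_to_K]
  have key : (‖x‖ ^ 2) ^ 2 ≤ ‖x‖ ^ 2 * c₀ := by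
    refine le_of_tendsto_of_tendsto (hnorm ▸ hf.norm.pow 2) (tendsto_const_nhds.mul hc) ?_
    filter_upwards [hle] with a ha
    calc ‖(inner 𝕜 x (f a) : 𝕜)‖ ^ 2 ≤ (‖x‖ * ‖f a‖) ^ 2 := by gcongr; exact norm_inner_le_norm _ _
      _ = ‖x‖ ^ 2 * ‖f a‖ ^ 2 := mul_pow _ _ _
      _ ≤ ‖x‖ ^ 2 * c a := by gcongr
  rcases (sq_nonneg ‖x‖).eq_or_lt with hx | hx
  · rwa [← hx]
  · rw [sq (‖x‖ ^ 2)] at key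
    exact le_of_mul_le_mul_left key hx

theorem IsOpen.subset_closure_setOf_of_ae {X : Type*} [TopologicalSpace X] [MeasurableSpace X]
    {μ : Measure X} [μ.IsOpenPosMeasure] {U : Set X} {p : X → Prop} (hU : IsOpen U)
    (hp : ∀ᵐ x ∂μ, x ∈ U → p x) :
    U ⊆ closure {x | x ∈ U ∧ p x} := by
  convert (Measure.dense_of_ae hp).open_subset_closure_inter hU using 2
  ext x
  exact ⟨fun h => ⟨h.1, fun _ => h.2⟩, fun h => ⟨h.1, h.2 h.1⟩⟩

theorem stmt11_general {H : Type*} [NormedAddCommGroup H] [InnerProductSpace ℂ H]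
    (I : Set ℝ) (hIopen : IsOpen I)
    (v : ℝ → H) (hv : ∀ w : H, ContinuousOn (fun lam : ℝ => (inner ℂ w (v lam) : ℂ)) I)
    (g : ℝ → ℝ) (hg : ContinuousOn g I)
    (hae : ∀ᵐ lam ∂(volume : Measure ℝ), lam ∈ I → ‖v lam‖ ^ 2 ≤ g lam) :
    ∀ lam ∈ I, ‖v lam‖ ^ 2 ≤ g lam := by
  intro lam₀ hlam₀
  set S := {lam | lam ∈ I ∧ ‖v lam‖ ^ 2 ≤ g lam}
  have : (𝓝[S] lam₀).NeBot :=
    mem_closure_iff_nhdsWithin_neBot.mp (hIopen.subset_closure_setOf_of_ae hae hlam₀)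
  have hSI : 𝓝[S] lam₀ ≤ 𝓝[I] lam₀ := nhdsWithin_mono _ fun _ h => h.1
  exact norm_sq_le_of_tendsto_inner_self ((hv (v lam₀) lam₀ hlam₀).tendsto.mono_left hSI)
    ((hg lam₀ hlam₀).tendsto.mono_left hSI) (eventually_mem_nhdsWithin.mono fun _ h => h.2)

/-- Let `H` be a complex Hilbert space, `I ⊆ ℝ` a nonempty open interval,
`v : I → H` weakly continuous, and `g : I → ℝ` continuous.  If `‖v(λ)‖² ≤ g(λ)` for
Lebesgue-a.e. `λ ∈ I`, then `‖v(λ)‖² ≤ g(λ)` for every `λ ∈ I`. -/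
theorem stmt11 {H : Type*} [NormedAddCommGroup H] [InnerProductSpace ℂ H]
    (I : Set ℝ) (hIopen : IsOpen I) (hIconn : I.OrdConnected) (hne : I.Nonempty)
    (v : ℝ → H) (hv : ∀ w : H, ContinuousOn (fun lam : ℝ => (inner ℂ w (v lam) : ℂ)) I)
    (g : ℝ → ℝ) (hg : ContinuousOn g I)
    (hae : ∀ᵐ lam ∂(volume : Measure ℝ), lam ∈ I → ‖v lam‖ ^ 2 ≤ g lam) :
    ∀ lam ∈ I, ‖v lam‖ ^ 2 ≤ g lam :=
  stmt11_general I hIopen v hv g hg hae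
end

section
/- Let H be a complex Hilbert space, T a bounded self-adjoint operator on H, φ ∈ H, and ε > 0. Then for every λ ∈ ℝ the operators T − (λ + iε)·Id and T − (λ − iε)·Id are invertible in the bounded operators on H, the function λ ↦ ⟪φ, ((T − (λ + iε))^{-1} − (T − (λ − iε))^{-1}) φ⟫ is Lebesgue integrable on ℝ, and ∫_ℝ ⟪φ, ((T − (λ + iε))^{-1} − (T − (λ − iε))^{-1}) φ⟫ dλ = 2πi · ‖φ‖². -/
/-!
On the real spectrum of `T`, `(t - (λ + iε))⁻¹ - (t - (λ - iε))⁻¹ = 2πi · p_{t,ε}(λ)`, where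
`p_{t,ε}` is the Cauchy density with location `t` and scale `ε`; so the integrand is
`⟪φ, f_λ(T) φ⟫` with `f_λ(t) = 2πi · p_{t,ε}(λ)` in the continuous functional calculus. For `t` in the
bounded spectrum they are all dominated by a multiple of the standard Cauchy density, so the
functional calculus commutes with `∫ dλ`, and since each density has total mass `1`,
`∫ f_λ(T) dλ = 2πi · 1`.
-/

open MeasureTheory ProbabilityTheory Complex
open scoped Real NNReal

lemma one_add_sq_le_two_mul_one_add_sq_mul_one_add_sq (x y : ℝ) :
    1 + x ^ 2 ≤ 2 * (1 + y ^ 2) * (1 + (x - y) ^ 2) := by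
  nlinarith [sq_nonneg (x - 2 * y), sq_nonneg (y * (x - y))]

lemma cauchyPDFReal_le_mul_cauchyPDFReal_zero_one (x₀ x : ℝ) {γ : ℝ≥0} (hγ : γ ≠ 0) :
    cauchyPDFReal x₀ γ x ≤ 2 * (γ + γ⁻¹) * (1 + x₀ ^ 2) * cauchyPDFReal 0 1 x := by
  have hγ' : (0 : ℝ) < γ := by positivity
  have h := one_add_sq_le_two_mul_one_add_sq_mul_one_add_sq x x₀
  simp only [cauchyPDFReal_def, NNReal.coe_one, NNReal.coe_inv, sub_zero, one_pow]
  field_simp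
  nlinarith [mul_le_mul_of_nonneg_left h (sq_nonneg (γ : ℝ)),
    mul_nonneg (add_nonneg (sq_nonneg (x - x₀)) (pow_nonneg (sq_nonneg (γ : ℝ)) 2))
      (by positivity : (0 : ℝ) ≤ 2 * (1 + x₀ ^ 2))]

lemma continuous_cauchyPDFReal_uncurry {γ : ℝ≥0} (hγ : γ ≠ 0) :
    Continuous fun p : ℝ × ℝ => cauchyPDFReal p.1 γ p.2 := by
  have hγ' : (0 : ℝ) < γ := by positivity
  simp only [cauchyPDFReal_def]
  exact continuous_const.mul
    ((by fun_prop : Continuous fun p : ℝ × ℝ => (p.2 - p.1) ^ 2 + (γ : ℝ) ^ 2).inv₀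
      fun _ => by positivity)

lemma inv_sub_inv_eq_cauchyPDFReal (t l : ℝ) {ε : ℝ} (hε : 0 < ε) :
    ((t : ℂ) - (l + ε * I))⁻¹ - ((t : ℂ) - (l - ε * I))⁻¹
      = ((2 * π * cauchyPDFReal t ε.toNNReal l : ℝ) : ℂ) * I := by
  have h₁ : (t : ℂ) - (l + ε * I) ≠ 0 := fun h => by simpa [hε.ne'] using congrArg im h
  have h₂ : (t : ℂ) - (l - ε * I) ≠ 0 := fun h => by simpa [hε.ne'] using congrArg im h
  have hprod : ((t : ℂ) - (l + ε * I)) * ((t : ℂ) - (l - ε * I))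
      = ((l - t) ^ 2 + ε ^ 2 : ℝ) := by
    push_cast
    ring_nf
    rw [I_sq]
    ring
  have hd : (l - t) ^ 2 + ε ^ 2 ≠ 0 := by positivity
  have hreal : 2 * π * cauchyPDFReal t ε.toNNReal l * ((l - t) ^ 2 + ε ^ 2) = 2 * ε := by
    rw [cauchyPDFReal_def, Real.coe_toNNReal _ hε.le]
    field_simp
  rw [inv_sub_inv h₁ h₂, hprod, div_eq_iff (mod_cast hd), mul_right_comm, ← ofReal_mul, hreal]
  push_cast
  ring

section CStarAlgebra

variable {A : Type*} [CStarAlgebra A] {a : A}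

lemma isUnit_sub_smul_one_of_notMem_spectrum {z : ℂ} (hz : z ∉ spectrum ℂ a) :
    IsUnit (a - z • 1) := by
  rw [← neg_sub, ← Algebra.algebraMap_eq_smul_one]
  exact (spectrum.notMem_iff.mp hz).neg

lemma continuousOn_sub_inv_spectrum {z : ℂ} (hz : z ∉ spectrum ℂ a) :
    ContinuousOn (fun x => (x - z)⁻¹) (spectrum ℂ a) :=
  (continuousOn_id.sub continuousOn_const).inv₀ fun _ hx =>
    sub_ne_zero.mpr (ne_of_mem_of_not_mem hx hz)

lemma cfc_sub_inv_eq_ringInverse [IsStarNormal a] {z : ℂ} (hz : z ∉ spectrum ℂ a) :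
    cfc (fun x => (x - z)⁻¹) a = Ring.inverse (a - z • 1) := by
  rw [cfc_inv (· - z) a fun _ hx => sub_ne_zero.mpr (ne_of_mem_of_not_mem hx hz), cfc_sub _ _ a,
    cfc_id' ℂ a, cfc_const z a, Algebra.algebraMap_eq_smul_one]

lemma integrable_cfc_cauchyPDFReal_and_integral_eq [IsStarNormal a] {γ : ℝ≥0} (hγ : γ ≠ 0) :
    Integrable (fun l : ℝ => cfc (fun z : ℂ => ((2 * π * cauchyPDFReal z.re γ l : ℝ) : ℂ) * I) a)
      ∧ ∫ l : ℝ, cfc (fun z : ℂ => ((2 * π * cauchyPDFReal z.re γ l : ℝ) : ℂ) * I) a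
        = (2 * π * I) • (1 : A) := by
  set f : ℝ → ℂ → ℂ := fun l z => ((2 * π * cauchyPDFReal z.re γ l : ℝ) : ℂ) * I
  obtain ⟨M, hM⟩ := (spectrum.isCompact (𝕜 := ℂ) a).isBounded.exists_norm_le
  set bound : ℝ → ℝ := fun l => 2 * π * (2 * (γ + γ⁻¹) * (1 + M ^ 2) * cauchyPDFReal 0 1 l)
  have hf : ContinuousOn (Function.uncurry f) (Set.univ ×ˢ spectrum ℂ a) := by
    have hpair : Continuous fun p : ℝ × ℂ => (p.2.re, p.1) :=
      (continuous_re.comp continuous_snd).prodMk continuous_fst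
    have : Continuous fun p : ℝ × ℂ => f p.1 p.2 :=
      (continuous_ofReal.comp (continuous_const.mul
        ((continuous_cauchyPDFReal_uncurry hγ).comp hpair))).mul continuous_const
    exact this.continuousOn
  have hbound : ∀ᵐ l, ∀ z ∈ spectrum ℂ a, ‖f l z‖ ≤ bound l := by
    refine .of_forall fun l z hz => ?_
    have hre : z.re ^ 2 ≤ M ^ 2 := by
      rw [← sq_abs]
      exact pow_le_pow_left₀ (abs_nonneg _) ((abs_re_le_norm z).trans (hM z hz)) 2
    have := cauchyPDF_pos z.re hγ l
    have := cauchyPDF_pos 0 one_ne_zero l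
    rw [norm_mul, norm_I, mul_one, norm_real, Real.norm_of_nonneg (by positivity)]
    simp only [bound]
    gcongr
    refine (cauchyPDFReal_le_mul_cauchyPDFReal_zero_one _ _ hγ).trans ?_
    gcongr
  have hint : HasFiniteIntegral bound :=
    (((integrable_cauchyPDFReal 0).const_mul _).const_mul _).hasFiniteIntegral
  refine ⟨integrable_cfc f bound a hf hbound hint, ?_⟩
  have hf_integral : ∀ z : ℂ, ∫ l, f l z = 2 * π * I := fun z => by
    simp only [f, integral_mul_const, integral_complex_ofReal, integral_const_mul,
      integral_cauchyPDFReal_eq_one _ hγ]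
    push_cast
    ring
  rw [← cfc_integral f bound a hf hbound hint]
  simp only [hf_integral, cfc_const _ a, Algebra.algebraMap_eq_smul_one]

namespace IsSelfAdjoint

lemma notMem_spectrum_of_im_ne_zero (ha : IsSelfAdjoint a) {z : ℂ} (hz : z.im ≠ 0) :
    z ∉ spectrum ℂ a :=
  fun h => hz (ha.im_eq_zero_of_mem_spectrum h)

lemma ringInverse_sub_ringInverse_eq_cfc (ha : IsSelfAdjoint a) {ε : ℝ} (hε : 0 < ε) (l : ℝ) :
    Ring.inverse (a - (l + ε * I) • 1) - Ring.inverse (a - (l - ε * I) • 1)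
      = cfc (fun z : ℂ => ((2 * π * cauchyPDFReal z.re ε.toNNReal l : ℝ) : ℂ) * I) a := by
  have : IsStarNormal a := ha.isStarNormal
  have hplus := ha.notMem_spectrum_of_im_ne_zero (z := l + ε * I) (by simp [hε.ne'])
  have hminus := ha.notMem_spectrum_of_im_ne_zero (z := l - ε * I) (by simp [hε.ne'])
  rw [← cfc_sub_inv_eq_ringInverse hplus, ← cfc_sub_inv_eq_ringInverse hminus,
    ← cfc_sub _ _ a (continuousOn_sub_inv_spectrum hplus) (continuousOn_sub_inv_spectrum hminus)]
  refine cfc_congr fun z hz => ?_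
  rw [← inv_sub_inv_eq_cauchyPDFReal _ _ hε, ← ha.mem_spectrum_eq_re hz]

theorem integrable_ringInverse_sub_ringInverse_and_integral_eq (ha : IsSelfAdjoint a) {ε : ℝ}
    (hε : 0 < ε) :
    Integrable (fun l : ℝ =>
        Ring.inverse (a - (l + ε * I) • 1) - Ring.inverse (a - (l - ε * I) • 1))
      ∧ ∫ l : ℝ, Ring.inverse (a - (l + ε * I) • 1) - Ring.inverse (a - (l - ε * I) • 1)
        = (2 * π * I) • (1 : A) := by
  have : IsStarNormal a := ha.isStarNormal
  simp_rw [ha.ringInverse_sub_ringInverse_eq_cfc hε]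
  exact integrable_cfc_cauchyPDFReal_and_integral_eq (Real.toNNReal_pos.mpr hε).ne'

end IsSelfAdjoint

end CStarAlgebra

/-- Let `T` be a bounded self-adjoint operator on a complex Hilbert
space `H`, `φ ∈ H` and `ε > 0`.  Then for every `λ ∈ ℝ` the operators `T − (λ ± iε)` are
invertible, the function `λ ↦ ⟪φ, ((T − (λ+iε))⁻¹ − (T − (λ−iε))⁻¹)φ⟫` is Lebesgue
integrable on `ℝ`, and its integral equals `2πi‖φ‖²`. -/
theorem stmt17 {H : Type*} [NormedAddCommGroup H] [InnerProductSpace ℂ H]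
    [CompleteSpace H] (T : H →L[ℂ] H) (hT : IsSelfAdjoint T) (φ : H)
    (ε : ℝ) (hε : 0 < ε) :
    (∀ lam : ℝ,
      IsUnit (T - ((lam : ℂ) + (ε : ℂ) * Complex.I) • (1 : H →L[ℂ] H)) ∧
      IsUnit (T - ((lam : ℂ) - (ε : ℂ) * Complex.I) • (1 : H →L[ℂ] H)))
    ∧ Integrable (fun lam : ℝ =>
        (inner ℂ φ ((Ring.inverse (T - ((lam : ℂ) + (ε : ℂ) * Complex.I) • (1 : H →L[ℂ] H))
          - Ring.inverse (T - ((lam : ℂ) - (ε : ℂ) * Complex.I) • (1 : H →L[ℂ] H))) φ) : ℂ))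
    ∧ ∫ lam : ℝ,
        (inner ℂ φ ((Ring.inverse (T - ((lam : ℂ) + (ε : ℂ) * Complex.I) • (1 : H →L[ℂ] H))
          - Ring.inverse (T - ((lam : ℂ) - (ε : ℂ) * Complex.I) • (1 : H →L[ℂ] H))) φ) : ℂ)
        = 2 * (Real.pi : ℂ) * Complex.I * (‖φ‖ : ℂ) ^ 2 := by
  have hunit (z : ℂ) (hz : z.im ≠ 0) : IsUnit (T - z • 1) :=
    isUnit_sub_smul_one_of_notMem_spectrum (hT.notMem_spectrum_of_im_ne_zero hz)
  obtain ⟨hint, hintegral⟩ := hT.integrable_ringInverse_sub_ringInverse_and_integral_eq hε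
  let L : (H →L[ℂ] H) →L[ℂ] ℂ := (innerSL ℂ φ).comp (ContinuousLinearMap.apply ℂ H φ)
  refine ⟨fun l => ⟨hunit _ (by simp [hε.ne']), hunit _ (by simp [hε.ne'])⟩,
    L.integrable_comp hint, ?_⟩
  calc _ = L (∫ l : ℝ, Ring.inverse (T - (l + ε * I) • 1) - Ring.inverse (T - (l - ε * I) • 1)) :=
        L.integral_comp_comm hint
    _ = _ := by
      rw [hintegral]
      simp [L, inner_self_eq_norm_sq_to_K]
end
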